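/- Let n ≥ 1 be an integer and let b, c ∈ ℝ with c > 0. If b > c + n, then all n zeros of F(−n, b; c; z) are real and lie in the open interval (0, 1). If b < −n, then all n zeros of F(−n, b; c; z) are real and negative. -/

import Mathlib

/-!
Up to the positive constant `(c)ₙ`, `F(-n, b; c; x)` arises from `1` by `n` Rodrigues steps
`p ↦ x^(1-A) (1-x)^(1-B) d/dx [x^A (1-x)^B p]`, with `A = c + n - 1 - k` and `B = b - c - k`
at step `k`.
This is checked through the hypergeometric equation: each step intertwines two hypergeometric
operators, and for `c > 0` a polynomial solution is determined by its constant term.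

Each step creates one more zero: if `|x|^A |1-x|^B p` tends to `0` at both ends of an interval and
vanishes at `k` points inside, Rolle's theorem gives `k + 1` zeros of its derivative there.
For `b > c + n` the interval is `(0, 1)`, where `A, B > 0`; for `b < -n` it is `(-∞, 0)`, where
the weighted polynomial still decays at `-∞` because `A + B + deg p < 0`. So `F` has `n` distinct
zeros in the interval, and these are all its zeros since `deg F ≤ n`.
-/

open Polynomial
open scoped Classical

/-- The hypergeometric polynomial `F(-n, b; c; z) = ∑_{k=0}^n ((-n)_k (b)_k / ((c)_k k!)) z^k`,
viewed as a polynomial over `ℂ` (with real parameters `b`, `c`). -/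
noncomputable def hypPoly (n : ℕ) (b c : ℝ) : Polynomial ℂ :=
  ∑ k ∈ Finset.range (n + 1),
    Polynomial.C ((((((ascPochhammer ℝ k).eval (-(n : ℝ))) * ((ascPochhammer ℝ k).eval b)) /
      (((ascPochhammer ℝ k).eval c) * (Nat.factorial k : ℝ))) : ℝ) : ℂ) * Polynomial.X ^ k

/-- Number of zeros of `p`, counted with multiplicity, lying in the set `S ⊆ ℂ`. -/
noncomputable def countIn (p : Polynomial ℂ) (S : Set ℂ) : ℕ :=
  Multiset.card (p.roots.filter (fun z => z ∈ S))

open Set Filter Topology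

/-- `hypOp c (a + b + 1) (-a * b)` is the operator of the hypergeometric equation of
`F(a, b; c; x)`. -/
noncomputable def hypOp (u v w : ℝ) (p : ℝ[X]) : ℝ[X] :=
  X * (1 - X) * derivative (derivative p) + (C u - C v * X) * derivative p + C w * p

noncomputable def rodriguesStep (A B : ℝ) (p : ℝ[X]) : ℝ[X] :=
  (C A * (1 - X) - C B * X) * p + X * (1 - X) * derivative p

noncomputable def rodriguesIter (A B : ℕ → ℝ) : ℕ → ℝ[X]
  | 0 => 1
  | k + 1 => rodriguesStep (A k) (B k) (rodriguesIter A B k)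

theorem hypOp_rodriguesStep (A B κ : ℝ) (p : ℝ[X]) :
    hypOp A (A + B) ((κ + 1) * (A + B + κ)) (rodriguesStep A B p) =
      rodriguesStep A B (hypOp (A + 1) (A + B + 2) (κ * (A + B + κ + 1)) p) := by
  simp only [hypOp, rodriguesStep, derivative_add, derivative_mul, derivative_sub, derivative_C,
    derivative_X, derivative_one, derivative_zero, derivative_ofNat, C_add, C_mul, C_1, map_ofNat]
  ring

/-- `rodriguesIter … k` solves the hypergeometric equation of `F(-k, b + n - k; c + n - k; x)`. -/
theorem hypOp_rodriguesIter_eq_zero (n : ℕ) (b c : ℝ) (k : ℕ) :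
    hypOp (c + n - k) (b + n - 2 * k + 1) (k * (b + n - k))
      (rodriguesIter (fun j => c + n - 1 - j) (fun j => b - c - j) k) = 0 := by
  induction k with
  | zero => simp [rodriguesIter, hypOp]
  | succ k ih =>
    have h := hypOp_rodriguesStep (c + n - 1 - k) (b - c - k) k
      (rodriguesIter (fun j => c + n - 1 - j) (fun j => b - c - j) k)
    rw [show c + n - 1 - k + 1 = c + n - k by ring,
      show c + n - 1 - k + (b - c - k) + 2 = b + n - 2 * k + 1 by ring,
      show (k : ℝ) * (c + n - 1 - k + (b - c - k) + k + 1) = k * (b + n - k) by ring, ih,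
      show rodriguesStep _ _ (0 : ℝ[X]) = 0 by simp [rodriguesStep]] at h
    rw [rodriguesIter]
    convert h using 2 <;> push_cast <;> ring

theorem coeff_hypOp (u v w : ℝ) (p : ℝ[X]) (m : ℕ) :
    (hypOp u v w p).coeff m =
      (m + 1) * (m + u) * p.coeff (m + 1) + (w - (m - 1) * m - v * m) * p.coeff m := by
  have h : hypOp u v w p = X * derivative (derivative p) - X * (X * derivative (derivative p))
      + C u * derivative p - C v * (X * derivative p) + C w * p := by
    unfold hypOp; ring
  rw [h]
  rcases m with _ | _ | m <;>
    simp [coeff_X_mul, coeff_derivative, mul_coeff_zero] <;> ring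

theorem eq_of_hypOp_eq_zero {u v w : ℝ} (hu : 0 < u) {p q : ℝ[X]} (hp : hypOp u v w p = 0)
    (hq : hypOp u v w q = 0) (h0 : p.coeff 0 = q.coeff 0) : p = q := by
  ext m
  induction m with
  | zero => exact h0
  | succ m ih =>
    have hp' := coeff_hypOp u v w p m
    have hq' := coeff_hypOp u v w q m
    rw [hp, coeff_zero] at hp'
    rw [hq, coeff_zero] at hq'
    have hne : ((m : ℝ) + 1) * (m + u) ≠ 0 := by positivity
    apply mul_left_cancel₀ hne
    linear_combination hq' - hp' - (w - (m - 1) * m - v * m) * ih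

noncomputable def hypCoeff (n : ℕ) (b c : ℝ) (k : ℕ) : ℝ :=
  ((ascPochhammer ℝ k).eval (-(n : ℝ)) * (ascPochhammer ℝ k).eval b) /
    ((ascPochhammer ℝ k).eval c * (Nat.factorial k : ℝ))

noncomputable def hypPolyReal (n : ℕ) (b c : ℝ) : ℝ[X] :=
  ∑ k ∈ Finset.range (n + 1), C (hypCoeff n b c k) * X ^ k

theorem hypPoly_eq_map (n : ℕ) (b c : ℝ) :
    hypPoly n b c = (hypPolyReal n b c).map (algebraMap ℝ ℂ) := by
  simp [hypPoly, hypPolyReal, Polynomial.map_sum, hypCoeff]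

theorem coeff_hypPolyReal (n : ℕ) (b c : ℝ) (m : ℕ) :
    (hypPolyReal n b c).coeff m = hypCoeff n b c m := by
  simp only [hypPolyReal, finsetSum_coeff, coeff_C_mul_X_pow, Finset.sum_ite_eq,
    Finset.mem_range]
  split_ifs with hm
  · rfl
  · simp [hypCoeff, ascPochhammer_eval_neg_coe_nat_of_lt (show n < m by omega)]

theorem natDegree_hypPolyReal_le (n : ℕ) (b c : ℝ) : (hypPolyReal n b c).natDegree ≤ n :=
  natDegree_sum_le_of_forall_le _ _ fun k hk =>
    (natDegree_C_mul_X_pow_le _ k).trans (Finset.mem_range_succ_iff.1 hk)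

theorem hypCoeff_succ (n : ℕ) (b : ℝ) {c : ℝ} (hc : 0 < c) (m : ℕ) :
    (m + 1) * (m + c) * hypCoeff n b c (m + 1) = (m - n) * (m + b) * hypCoeff n b c m := by
  have h1 := (ascPochhammer_pos m c hc).ne'
  have h2 : (m.factorial : ℝ) ≠ 0 := Nat.cast_ne_zero.2 m.factorial_ne_zero
  simp only [hypCoeff, ascPochhammer_succ_eval, Nat.factorial_succ]
  field_simp
  push_cast
  ring

theorem hypOp_hypPolyReal (n : ℕ) (b : ℝ) {c : ℝ} (hc : 0 < c) :
    hypOp c (b - n + 1) (n * b) (hypPolyReal n b c) = 0 := by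
  ext m
  rw [coeff_hypOp, coeff_hypPolyReal, coeff_hypPolyReal, coeff_zero]
  linear_combination hypCoeff_succ n b hc m

theorem hypOp_C_mul (u v w a : ℝ) (p : ℝ[X]) : hypOp u v w (C a * p) = C a * hypOp u v w p := by
  simp only [hypOp, derivative_C_mul]
  ring

theorem eval_zero_rodriguesStep (A B : ℝ) (p : ℝ[X]) :
    (rodriguesStep A B p).eval 0 = A * p.eval 0 := by
  simp [rodriguesStep]

theorem eval_zero_rodriguesIter_pos {A : ℕ → ℝ} (B : ℕ → ℝ) {k : ℕ} (hA : ∀ j < k, 0 < A j) :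
    0 < (rodriguesIter A B k).eval 0 := by
  induction k with
  | zero => simp [rodriguesIter]
  | succ k ih =>
    rw [rodriguesIter, eval_zero_rodriguesStep]
    exact mul_pos (hA k k.lt_succ_self) (ih fun j hj => hA j (hj.trans k.lt_succ_self))

theorem rodriguesIter_eq_C_mul_hypPolyReal (n : ℕ) (b : ℝ) {c : ℝ} (hc : 0 < c) :
    rodriguesIter (fun j => c + n - 1 - j) (fun j => b - c - j) n =
      C ((rodriguesIter (fun j => c + n - 1 - j) (fun j => b - c - j) n).eval 0) *
        hypPolyReal n b c := by
  refine eq_of_hypOp_eq_zero hc ?_ (by rw [hypOp_C_mul, hypOp_hypPolyReal n b hc, mul_zero]) ?_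
  · convert hypOp_rodriguesIter_eq_zero n b c n using 2 <;> ring
  · rw [coeff_C_mul, coeff_hypPolyReal, coeff_zero_eq_eval_zero]
    simp [hypCoeff]

theorem natDegree_rodriguesStep_le (A B : ℝ) (p : ℝ[X]) :
    (rodriguesStep A B p).natDegree ≤ p.natDegree + 2 := by
  have h1 : (C A * (1 - X) - C B * X).natDegree ≤ 2 := by compute_degree!
  have h2 : (X * (1 - X) : ℝ[X]).natDegree ≤ 2 := by compute_degree
  have h3 : (derivative p).natDegree ≤ p.natDegree :=
    (natDegree_derivative_le p).trans (Nat.sub_le _ _)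
  unfold rodriguesStep
  refine natDegree_add_le_of_degree_le ?_ ?_ <;> rw [add_comm]
  · exact natDegree_mul_le_of_le h1 le_rfl
  · exact natDegree_mul_le_of_le h2 h3

theorem natDegree_rodriguesIter_le (A B : ℕ → ℝ) (k : ℕ) :
    (rodriguesIter A B k).natDegree ≤ 2 * k := by
  induction k with
  | zero => simp [rodriguesIter]
  | succ k ih =>
    rw [rodriguesIter]
    linarith [natDegree_rodriguesStep_le (A k) (B k) (rodriguesIter A B k)]

theorem hasDerivAt_abs_rpow_of_ne_zero {x : ℝ} (hx : x ≠ 0) (A : ℝ) :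
    HasDerivAt (fun t => |t| ^ A) (A * |x| ^ A / x) x := by
  convert (hasDerivAt_abs hx).rpow_const (p := A) (Or.inl (abs_ne_zero.2 hx)) using 1
  rw [Real.rpow_sub_one (abs_ne_zero.2 hx)]
  rcases hx.lt_or_gt with h | h <;> simp [h, abs_of_neg, abs_of_pos] <;> field_simp

/-- The absolute values let one weight serve both on `(0, 1)` and on `(-∞, 0)`. -/
noncomputable def jacobiWeight (A B x : ℝ) : ℝ := |x| ^ A * |1 - x| ^ B

theorem jacobiWeight_pos (A B : ℝ) {x : ℝ} (hx0 : x ≠ 0) (hx1 : x ≠ 1) :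
    0 < jacobiWeight A B x :=
  mul_pos (Real.rpow_pos_of_pos (abs_pos.2 hx0) A)
    (Real.rpow_pos_of_pos (abs_pos.2 (sub_ne_zero.2 hx1.symm)) B)

theorem hasDerivAt_jacobiWeight_mul_eval (A B : ℝ) (p : ℝ[X]) {x : ℝ} (hx0 : x ≠ 0)
    (hx1 : x ≠ 1) :
    HasDerivAt (fun t => jacobiWeight A B t * p.eval t)
      (jacobiWeight A B x / (x * (1 - x)) * (rodriguesStep A B p).eval x) x := by
  have h1x : 1 - x ≠ 0 := sub_ne_zero.2 hx1.symm
  have hB : HasDerivAt (fun t => |1 - t| ^ B) (B * |1 - x| ^ B / (1 - x) * -1) x :=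
    (hasDerivAt_abs_rpow_of_ne_zero h1x B).comp x ((hasDerivAt_id x).const_sub 1)
  refine (((hasDerivAt_abs_rpow_of_ne_zero hx0 A).mul hB).mul (p.hasDerivAt x)).congr_deriv ?_
  simp only [jacobiWeight, rodriguesStep, eval_add, eval_mul, eval_sub, eval_C, eval_X, eval_one,
    Pi.mul_apply]
  field_simp
  ring

theorem tendsto_jacobiWeight_mul_eval_nhds_zero {A : ℝ} (hA : 0 < A) (B : ℝ) (p : ℝ[X]) :
    Tendsto (fun t => jacobiWeight A B t * p.eval t) (𝓝 0) (𝓝 0) := by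
  have h : ContinuousAt (fun t => jacobiWeight A B t * p.eval t) 0 :=
    ((continuous_abs.continuousAt.rpow_const (Or.inr hA.le)).mul
      ((continuousAt_const.sub continuousAt_id).abs.rpow_const (Or.inl (by norm_num)))).mul
      p.continuousAt
  simpa [jacobiWeight, Real.zero_rpow hA.ne'] using h.tendsto

theorem tendsto_jacobiWeight_mul_eval_nhds_one (A : ℝ) {B : ℝ} (hB : 0 < B) (p : ℝ[X]) :
    Tendsto (fun t => jacobiWeight A B t * p.eval t) (𝓝 1) (𝓝 0) := by
  have h : ContinuousAt (fun t => jacobiWeight A B t * p.eval t) 1 :=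
    ((continuous_abs.continuousAt.rpow_const (Or.inl (by norm_num))).mul
      ((continuousAt_const.sub continuousAt_id).abs.rpow_const (Or.inr hB.le))).mul
      p.continuousAt
  simpa [jacobiWeight, Real.zero_rpow hB.ne'] using h.tendsto

theorem abs_eval_le_of_nonpos (p : ℝ[X]) {t : ℝ} (ht : t ≤ 0) :
    |p.eval t| ≤ (∑ j ∈ Finset.range (p.natDegree + 1), |p.coeff j|) * (1 - t) ^ p.natDegree := by
  rw [eval_eq_sum_range, Finset.sum_mul]
  refine (Finset.abs_sum_le_sum_abs _ _).trans (Finset.sum_le_sum fun j hj => ?_)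
  rw [abs_mul, abs_pow]
  gcongr
  calc |t| ^ j ≤ (1 - t) ^ j := by gcongr; rw [abs_of_nonpos ht]; linarith
    _ ≤ (1 - t) ^ p.natDegree :=
      pow_le_pow_right₀ (by linarith) (Finset.mem_range_succ_iff.1 hj)

theorem tendsto_jacobiWeight_mul_eval_atBot {A B : ℝ} (hA : 0 ≤ A) (p : ℝ[X])
    (hdeg : A + B + p.natDegree < 0) :
    Tendsto (fun t => jacobiWeight A B t * p.eval t) atBot (𝓝 0) := by
  set M := ∑ j ∈ Finset.range (p.natDegree + 1), |p.coeff j|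
  have hlim : Tendsto (fun t : ℝ => M * (1 - t) ^ (A + B + p.natDegree)) atBot (𝓝 0) := by
    simpa [sub_eq_add_neg] using
      ((tendsto_rpow_neg_atTop (by linarith : 0 < -(A + B + p.natDegree))).comp
      (tendsto_atTop_add_const_left _ 1 tendsto_neg_atBot_atTop)).const_mul M
  refine squeeze_zero_norm' ?_ hlim
  filter_upwards [eventually_le_atBot 0] with t ht
  have h1t : 0 < 1 - t := by linarith
  rw [Real.norm_eq_abs, jacobiWeight, abs_mul, abs_mul, abs_of_pos h1t,
    abs_of_nonneg (Real.rpow_nonneg (abs_nonneg t) A),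
    abs_of_nonneg (Real.rpow_nonneg h1t.le B), Real.rpow_add h1t, Real.rpow_add h1t,
    Real.rpow_natCast]
  have hA' : |t| ^ A ≤ (1 - t) ^ A :=
    Real.rpow_le_rpow (abs_nonneg t) (by rw [abs_of_nonpos ht]; linarith) hA
  have hp := abs_eval_le_of_nonpos p ht
  calc |t| ^ A * (1 - t) ^ B * |p.eval t|
        ≤ (1 - t) ^ A * (1 - t) ^ B * (M * (1 - t) ^ p.natDegree) := by gcongr
    _ = _ := by ring

/-- Rolle's theorem with multiplicities on `I`, whose ends are approached along `l₁` and `l₂`. -/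
def HasRolleProperty (I : Set ℝ) (l₁ l₂ : Filter ℝ) : Prop :=
  ∀ ⦃f f' : ℝ → ℝ⦄, (∀ x ∈ I, HasDerivAt f (f' x) x) → Tendsto f l₁ (𝓝 0) →
    Tendsto f l₂ (𝓝 0) → ∀ s : Finset ℝ, (∀ x ∈ s, x ∈ I ∧ f x = 0) →
      ∃ t : Finset ℝ, t.card = s.card + 1 ∧ ∀ y ∈ t, y ∈ I ∧ f' y = 0

theorem card_add_one_le_encard_deriv_zeros {f f' : ℝ → ℝ} {a b : ℝ} (hab : a < b)
    (hf : ∀ x ∈ Ioo a b, HasDerivAt f (f' x) x) (ha : Tendsto f (𝓝[>] a) (𝓝 0))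
    (hb : Tendsto f (𝓝[<] b) (𝓝 0)) {s : Finset ℝ} (hs : ∀ x ∈ s, x ∈ Ioo a b ∧ f x = 0) :
    (s.card + 1 : ℕ∞) ≤ {y | y ∈ Ioo a b ∧ f' y = 0}.encard := by
  set Z := {y | y ∈ Ioo a b ∧ f' y = 0}
  rcases Z.finite_or_infinite with hZ | hZ
  swap
  · simp [hZ.encard_eq]
  have hs0 : ∀ x ∈ s, Tendsto f (𝓝 x) (𝓝 0) := fun x hx =>
    (hs x hx).2 ▸ (hf x (hs x hx).1).continuousAt.tendsto
  -- Rolle between any two points of `s ∪ {a, b}` gives `|s| + 2 ≤ |Z| + 1`.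
  set S := insert a (insert b s)
  have hSab : ∀ x ∈ S, a ≤ x ∧ x ≤ b := by
    simp only [S, Finset.mem_insert]
    rintro x (rfl | rfl | hx)
    exacts [⟨le_rfl, hab.le⟩, ⟨hab.le, le_rfl⟩, ⟨(hs x hx).1.1.le, (hs x hx).1.2.le⟩]
  have hS : S.card = s.card + 2 := by
    rw [Finset.card_insert_of_notMem, Finset.card_insert_of_notMem]
    · exact fun hb' => (hs b hb').1.2.false
    · simp only [Finset.mem_insert, not_or]
      exact ⟨hab.ne, fun ha' => (hs a ha').1.1.false⟩
  have hinter := Finset.card_le_of_interleaved (s := S) (t := hZ.toFinset)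
    fun x hx y hy hxy _ => by
      have hx' : Tendsto f (𝓝[>] x) (𝓝 0) := by
        rcases Finset.mem_insert.1 hx with rfl | hx
        · exact ha
        rcases Finset.mem_insert.1 hx with rfl | hx
        · exact absurd (hSab y hy).2 hxy.not_ge
        · exact (hs0 x hx).mono_left nhdsWithin_le_nhds
      have hy' : Tendsto f (𝓝[<] y) (𝓝 0) := by
        rcases Finset.mem_insert.1 hy with rfl | hy
        · exact absurd (hSab x hx).1 hxy.not_ge
        rcases Finset.mem_insert.1 hy with rfl | hy
        · exact hb
        · exact (hs0 y hy).mono_left nhdsWithin_le_nhds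
      have hsub : Ioo x y ⊆ Ioo a b := Ioo_subset_Ioo (hSab x hx).1 (hSab y hy).2
      obtain ⟨z, hz, hz0⟩ := exists_hasDerivAt_eq_zero' hxy hx' hy' fun z hz => hf z (hsub hz)
      exact ⟨z, hZ.mem_toFinset.2 ⟨hsub hz, hz0⟩, hz⟩
  rw [hZ.encard_eq_coe_toFinset_card]
  exact_mod_cast (by omega : s.card + 1 ≤ hZ.toFinset.card)

theorem hasRolleProperty_Ioo {a b : ℝ} (hab : a < b) :
    HasRolleProperty (Ioo a b) (𝓝[>] a) (𝓝[<] b) := by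
  intro f f' hf ha hb s hs
  obtain ⟨T, hTZ, hT⟩ :=
    Set.exists_subset_encard_eq (card_add_one_le_encard_deriv_zeros hab hf ha hb hs)
  have hTf : T.Finite := Set.finite_of_encard_eq_coe hT
  refine ⟨hTf.toFinset, ?_, fun y hy => hTZ (hTf.mem_toFinset.1 hy)⟩
  rw [hTf.encard_eq_coe_toFinset_card] at hT
  exact_mod_cast hT

/-- Transported from `Ioo 0 1` along the increasing bijection `u ↦ b + 1 - u⁻¹` onto `Iio b`. -/
theorem hasRolleProperty_Iio (b : ℝ) : HasRolleProperty (Iio b) atBot (𝓝[<] b) := by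
  intro f f' hf hbot hb s hs
  set φ : ℝ → ℝ := fun u => b + 1 - u⁻¹
  set ψ : ℝ → ℝ := fun x => (b + 1 - x)⁻¹
  have hφ : ∀ u ∈ Ioo (0 : ℝ) 1, φ u ∈ Iio b := fun u hu => by
    have := (one_lt_inv₀ hu.1).2 hu.2
    simp only [φ, mem_Iio]; linarith
  have hψ : ∀ x ∈ Iio b, ψ x ∈ Ioo (0 : ℝ) 1 := fun x hx => by
    have hx' : 1 < b + 1 - x := by simp only [mem_Iio] at hx; linarith
    exact ⟨inv_pos.2 (by linarith), inv_lt_one_of_one_lt₀ hx'⟩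
  have hφψ : ∀ x, φ (ψ x) = x := fun x => by simp [φ, ψ]
  have hψφ : ∀ u, ψ (φ u) = u := fun u => by simp [φ, ψ]
  have hderiv : ∀ u ∈ Ioo (0 : ℝ) 1, HasDerivAt (f ∘ φ) (f' (φ u) * (u ^ 2)⁻¹) u :=
    fun u hu => (hf (φ u) (hφ u hu)).comp u
      (by simpa using (hasDerivAt_inv hu.1.ne').const_sub (b + 1))
  have hlim0 : Tendsto φ (𝓝[>] 0) atBot :=
    tendsto_atBot_add_const_left _ _ (tendsto_neg_atTop_atBot.comp tendsto_inv_nhdsGT_zero)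
  have hlim1 : Tendsto φ (𝓝[<] 1) (𝓝[<] b) := by
    refine tendsto_nhdsWithin_iff.2 ⟨?_, ?_⟩
    · have : ContinuousAt (fun u : ℝ => b + 1 - u⁻¹) 1 := by fun_prop (disch := norm_num)
      simpa [φ] using this.tendsto.mono_left nhdsWithin_le_nhds
    · filter_upwards [Ioo_mem_nhdsLT zero_lt_one] with u hu using hφ u hu
  obtain ⟨t, ht, htI⟩ := hasRolleProperty_Ioo zero_lt_one hderiv (hbot.comp hlim0) (hb.comp hlim1)
    (s.image ψ) (by
      simp only [Finset.mem_image, forall_exists_index, and_imp]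
      rintro _ x hx rfl
      exact ⟨hψ x (hs x hx).1, by simp [hφψ, (hs x hx).2]⟩)
  refine ⟨t.image φ, ?_, ?_⟩
  · rw [Finset.card_image_of_injOn, ht, Finset.card_image_of_injOn]
    · exact fun x _ y _ hxy => by simpa [hφψ] using congrArg φ hxy
    · exact fun x _ y _ hxy => by simpa [hψφ] using congrArg ψ hxy
  · simp only [Finset.mem_image, forall_exists_index, and_imp]
    rintro _ u hu rfl
    have hu' := htI u hu
    refine ⟨hφ u hu'.1, ?_⟩
    simpa [hu'.1.1.ne'] using hu'.2

theorem exists_zeros_rodriguesIter {I : Set ℝ} {l₁ l₂ : Filter ℝ} (hI : HasRolleProperty I l₁ l₂)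
    (hI01 : ∀ x ∈ I, x ≠ 0 ∧ x ≠ 1) {A B : ℕ → ℝ} {m : ℕ}
    (hlim : ∀ k < m,
      Tendsto (fun t => jacobiWeight (A k) (B k) t * (rodriguesIter A B k).eval t) l₁ (𝓝 0) ∧
        Tendsto (fun t => jacobiWeight (A k) (B k) t * (rodriguesIter A B k).eval t) l₂ (𝓝 0)) :
    ∃ s : Finset ℝ, s.card = m ∧ ∀ x ∈ s, x ∈ I ∧ (rodriguesIter A B m).eval x = 0 := by
  induction m with
  | zero => exact ⟨∅, rfl, by simp⟩
  | succ m ih =>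
    obtain ⟨s, hs, hsI⟩ := ih fun k hk => hlim k (by omega)
    obtain ⟨h₁, h₂⟩ := hlim m m.lt_succ_self
    obtain ⟨t, ht, htI⟩ := hI
      (fun x hx => hasDerivAt_jacobiWeight_mul_eval (A m) (B m) _ (hI01 x hx).1 (hI01 x hx).2)
      h₁ h₂ s fun x hx => ⟨(hsI x hx).1, by simp [(hsI x hx).2]⟩
    refine ⟨t, hs ▸ ht, fun y hy => ⟨(htI y hy).1, ?_⟩⟩
    obtain ⟨hy0, hy1⟩ := hI01 y (htI y hy).1
    have hw : jacobiWeight (A m) (B m) y / (y * (1 - y)) ≠ 0 :=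
      div_ne_zero (jacobiWeight_pos _ _ hy0 hy1).ne' (mul_ne_zero hy0 (sub_ne_zero.2 hy1.symm))
    exact (mul_eq_zero.1 (htI y hy).2).resolve_left hw

theorem eval_rodriguesIter_eq_zero_iff (n : ℕ) (b : ℝ) {c : ℝ} (hc : 0 < c) (x : ℝ) :
    (rodriguesIter (fun j => c + n - 1 - j) (fun j => b - c - j) n).eval x = 0 ↔
      (hypPolyReal n b c).eval x = 0 := by
  have hpos := eval_zero_rodriguesIter_pos (fun j => b - c - j) (k := n)
    (A := fun j => c + n - 1 - j) fun j hj => by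
      have : (j : ℝ) + 1 ≤ n := by exact_mod_cast hj
      linarith
  rw [rodriguesIter_eq_C_mul_hypPolyReal n b hc, eval_mul, eval_C, mul_eq_zero,
    or_iff_right hpos.ne']

theorem exists_zeros_hypPolyReal_Ioo (n : ℕ) {b c : ℝ} (hc : 0 < c) (hb : c + n < b) :
    ∃ s : Finset ℝ, s.card = n ∧ ∀ x ∈ s, x ∈ Ioo 0 1 ∧ (hypPolyReal n b c).eval x = 0 := by
  obtain ⟨s, hs, hsI⟩ := exists_zeros_rodriguesIter (hasRolleProperty_Ioo zero_lt_one)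
    (fun x hx => ⟨hx.1.ne', hx.2.ne⟩)
    (A := fun j => c + n - 1 - j) (B := fun j => b - c - j) (m := n)
    fun k hk => by
      have : (k : ℝ) + 1 ≤ n := by exact_mod_cast hk
      exact ⟨(tendsto_jacobiWeight_mul_eval_nhds_zero (by linarith) _ _).mono_left
          nhdsWithin_le_nhds,
        (tendsto_jacobiWeight_mul_eval_nhds_one _ (by linarith) _).mono_left nhdsWithin_le_nhds⟩
  exact ⟨s, hs, fun x hx =>
    ⟨(hsI x hx).1, (eval_rodriguesIter_eq_zero_iff n b hc x).1 (hsI x hx).2⟩⟩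

theorem exists_zeros_hypPolyReal_Iio (n : ℕ) {b c : ℝ} (hc : 0 < c) (hb : b < -n) :
    ∃ s : Finset ℝ, s.card = n ∧ ∀ x ∈ s, x ∈ Iio 0 ∧ (hypPolyReal n b c).eval x = 0 := by
  obtain ⟨s, hs, hsI⟩ := exists_zeros_rodriguesIter (hasRolleProperty_Iio 0)
    (fun x hx => ⟨hx.ne, by linarith [mem_Iio.1 hx]⟩)
    (A := fun j => c + n - 1 - j) (B := fun j => b - c - j) (m := n)
    fun k hk => by
      have : (k : ℝ) + 1 ≤ n := by exact_mod_cast hk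
      have hdeg : ((rodriguesIter (fun j => c + n - 1 - j) (fun j => b - c - j) k).natDegree : ℝ) ≤
          2 * k := by
        exact_mod_cast natDegree_rodriguesIter_le _ _ k
      exact ⟨tendsto_jacobiWeight_mul_eval_atBot (by linarith) _ (by linarith),
        (tendsto_jacobiWeight_mul_eval_nhds_zero (by linarith) _ _).mono_left
          nhdsWithin_le_nhds⟩
  exact ⟨s, hs, fun x hx =>
    ⟨(hsI x hx).1, (eval_rodriguesIter_eq_zero_iff n b hc x).1 (hsI x hx).2⟩⟩

theorem roots_eq_of_natDegree_le_card {R : Type*} [CommRing R] [IsDomain R] {p : R[X]}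
    (hp : p ≠ 0) {s : Finset R} (hdeg : p.natDegree ≤ s.card) (hs : ∀ x ∈ s, p.IsRoot x) :
    p.roots = s.val :=
  (Multiset.eq_of_le_of_card_le ((Multiset.le_iff_subset s.nodup).2 fun x hx =>
    (mem_roots hp).2 (hs x hx)) ((card_roots' p).trans hdeg)).symm

theorem roots_hypPoly_of_zeros {n : ℕ} {b c : ℝ} {I : Set ℝ}
    (h : ∃ s : Finset ℝ, s.card = n ∧ ∀ x ∈ s, x ∈ I ∧ (hypPolyReal n b c).eval x = 0) :
    Multiset.card (hypPoly n b c).roots = n ∧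
      ∀ z ∈ (hypPoly n b c).roots, z.im = 0 ∧ z.re ∈ I := by
  obtain ⟨s, hs, hsI⟩ := h
  have hp : hypPolyReal n b c ≠ 0 := fun h0 => by
    simpa [h0, hypCoeff] using coeff_hypPolyReal n b c 0
  have hroots := roots_eq_of_natDegree_le_card hp (hs ▸ natDegree_hypPolyReal_le n b c)
    fun x hx => (hsI x hx).2
  have hcard : Multiset.card (hypPolyReal n b c).roots = (hypPolyReal n b c).natDegree :=
    le_antisymm (card_roots' _)
      (by rw [hroots, Finset.card_val, hs]; exact natDegree_hypPolyReal_le n b c)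
  rw [hypPoly_eq_map,
    ← roots_map_of_injective_of_card_eq_natDegree (algebraMap ℝ ℂ).injective hcard, hroots]
  refine ⟨by simp [hs], ?_⟩
  simp only [Multiset.mem_map, Finset.mem_val]
  rintro _ ⟨x, hx, rfl⟩
  exact ⟨Complex.ofReal_im x, by simpa using (hsI x hx).1⟩

theorem hypPoly_extreme_b_real_zeros_general (n : ℕ) (b c : ℝ) (hc : 0 < c) :
    (c + n < b →
      Multiset.card (hypPoly n b c).roots = n ∧
      ∀ z ∈ (hypPoly n b c).roots, z.im = 0 ∧ 0 < z.re ∧ z.re < 1) ∧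
    (b < -(n : ℝ) →
      Multiset.card (hypPoly n b c).roots = n ∧
      ∀ z ∈ (hypPoly n b c).roots, z.im = 0 ∧ z.re < 0) :=
  ⟨fun hb => roots_hypPoly_of_zeros (exists_zeros_hypPolyReal_Ioo n hc hb),
    fun hb => roots_hypPoly_of_zeros (exists_zeros_hypPolyReal_Iio n hc hb)⟩

/-- For `c > 0`: if `b > c + n` all zeros of `F(-n, b; c; z)` are real in `(0, 1)`;
if `b < -n` all zeros are real and negative. -/
theorem hypPoly_extreme_b_real_zeros (n : ℕ) (hn : 1 ≤ n) (b c : ℝ) (hc : 0 < c) :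
    (c + n < b →
      Multiset.card (hypPoly n b c).roots = n ∧
      ∀ z ∈ (hypPoly n b c).roots, z.im = 0 ∧ 0 < z.re ∧ z.re < 1) ∧
    (b < -(n : ℝ) →
      Multiset.card (hypPoly n b c).roots = n ∧
      ∀ z ∈ (hypPoly n b c).roots, z.im = 0 ∧ z.re < 0) :=
  hypPoly_extreme_b_real_zeros_general n b c hc
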